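/- arXiv:2206.12863 — 3 statements merged into one kernel-verified Lean document; each statement's English description precedes it below -/
import Mathlib

section
/- For every λ > 0, if the system (S_λ) admits a solution (u, v), then λ ≥ 4π·max{N1, N2}/(G(1)·H(1)·|V|). -/
open Real Finset

/-- The μ-Laplacian on a finite weighted graph. -/
noncomputable def graphLap {V : Type*} [Fintype V] (ω : V → V → ℝ) (μ : V → ℝ)
    (f : V → ℝ) (x : V) : ℝ :=
  (1 / μ x) * ∑ y, ω x y * (f y - f x)

/-- The integral of `f` over `V` with respect to the measure `μ`. -/
noncomputable def graphInt {V : Type*} [Fintype V] (μ : V → ℝ) (f : V → ℝ) : ℝ :=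
  ∑ x, μ x * f x

/-- The total volume `|V|` of the graph. -/
noncomputable def graphVol {V : Type*} [Fintype V] (μ : V → ℝ) : ℝ :=
  ∑ x, μ x

/-- The Dirac delta mass at vertex `p`. -/
noncomputable def diracDelta {V : Type*} [DecidableEq V] (μ : V → ℝ) (p x : V) : ℝ :=
  if x = p then 1 / μ p else 0

/-- `primFun F t = ∫_{√t}^{1} 2 s F(s²) ds`; this gives `g` from `G` and `h` from `H`. -/
noncomputable def primFun (F : ℝ → ℝ) (t : ℝ) : ℝ :=
  ∫ s in Real.sqrt t..(1 : ℝ), 2 * s * F (s ^ 2)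

/-- The pointwise squared gradient `|∇ f|²(x)`. -/
noncomputable def gradSq {V : Type*} [Fintype V] (ω : V → V → ℝ) (μ : V → ℝ)
    (f : V → ℝ) (x : V) : ℝ :=
  (1 / (2 * μ x)) * ∑ y, ω x y * (f y - f x) ^ 2

/-- The gradient norm `‖∇ f‖₂ = (∫_V |∇ f|² dμ)^{1/2}`. -/
noncomputable def gradNorm {V : Type*} [Fintype V] (ω : V → V → ℝ) (μ : V → ℝ)
    (f : V → ℝ) : ℝ :=
  Real.sqrt (graphInt μ (gradSq ω μ f))

/-- The mean value `f̄ = (1/|V|) ∫_V f dμ`. -/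
noncomputable def graphAvg {V : Type*} [Fintype V] (μ : V → ℝ) (f : V → ℝ) : ℝ :=
  (1 / graphVol μ) * graphInt μ f

/-- The `W^{1,2}(V)` norm, `(∫_V (|∇ f|² + f²) dμ)^{1/2}`. -/
noncomputable def sobolevNorm {V : Type*} [Fintype V] (ω : V → V → ℝ) (μ : V → ℝ)
    (f : V → ℝ) : ℝ :=
  Real.sqrt (graphInt μ (fun x => gradSq ω μ f x + f x ^ 2))

/-- `(u, v)` is a solution of the system `(S_λ)`. -/
def isSolution {V : Type*} [Fintype V] (ω : V → V → ℝ) (μ : V → ℝ)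
    (G H : ℝ → ℝ) (N1 N2 : ℕ) (u₀ v₀ : V → ℝ) (lam : ℝ) (u v : V → ℝ) : Prop :=
  ∀ x, graphLap ω μ u x =
      -lam * Real.exp (v₀ x + v x) * H (Real.exp (v₀ x + v x)) *
        primFun G (Real.exp (u₀ x + u x)) + 4 * Real.pi * N1 / graphVol μ ∧
    graphLap ω μ v x =
      -lam * Real.exp (u₀ x + u x) * G (Real.exp (u₀ x + u x)) *
        primFun H (Real.exp (v₀ x + v x)) + 4 * Real.pi * N2 / graphVol μ

/-- `(u, v)` is a lower solution of the system `(S_λ)`. -/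
def isLowerSolution {V : Type*} [Fintype V] (ω : V → V → ℝ) (μ : V → ℝ)
    (G H : ℝ → ℝ) (N1 N2 : ℕ) (u₀ v₀ : V → ℝ) (lam : ℝ) (u v : V → ℝ) : Prop :=
  ∀ x, graphLap ω μ u x ≥
      -lam * Real.exp (v₀ x + v x) * H (Real.exp (v₀ x + v x)) *
        primFun G (Real.exp (u₀ x + u x)) + 4 * Real.pi * N1 / graphVol μ ∧
    graphLap ω μ v x ≥
      -lam * Real.exp (u₀ x + u x) * G (Real.exp (u₀ x + u x)) *
        primFun H (Real.exp (v₀ x + v x)) + 4 * Real.pi * N2 / graphVol μ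

/-- `(uM, vM)` is a maximal solution of `(S_λ)`: it solves the system and any other
solution lies strictly below it. -/
def isMaximalSolution {V : Type*} [Fintype V] (ω : V → V → ℝ) (μ : V → ℝ)
    (G H : ℝ → ℝ) (N1 N2 : ℕ) (u₀ v₀ : V → ℝ) (lam : ℝ) (uM vM : V → ℝ) : Prop :=
  isSolution ω μ G H N1 N2 u₀ v₀ lam uM vM ∧
    ∀ u' v', isSolution ω μ G H N1 N2 u₀ v₀ lam u' v' → (u', v') ≠ (uM, vM) →
      ∀ x, u' x < uM x ∧ v' x < vM x

section MyAux

variable {V : Type*} [Fintype V]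

lemma my_sum_mul_lap (ω : V → V → ℝ) (μ : V → ℝ)
    (hω_symm : ∀ x y, ω x y = ω y x) (hμ : ∀ x, 0 < μ x) (f : V → ℝ) :
    ∑ x, μ x * graphLap ω μ f x = 0 := by
  have hterm : ∀ x, μ x * graphLap ω μ f x = ∑ y, ω x y * (f y - f x) := by
    intro x
    unfold graphLap
    have h0 : μ x ≠ 0 := (hμ x).ne'
    field_simp
  simp only [hterm]
  have h1 : (∑ x, ∑ y, ω x y * (f y - f x)) = ∑ x, ∑ y, ω x y * (f x - f y) := by
    rw [Finset.sum_comm]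
    exact Finset.sum_congr rfl fun x _ => Finset.sum_congr rfl fun y _ => by rw [hω_symm]
  have h2 : (∑ x, ∑ y, ω x y * (f y - f x)) + (∑ x, ∑ y, ω x y * (f x - f y)) = 0 := by
    rw [← Finset.sum_add_distrib]
    refine Finset.sum_eq_zero fun x _ => ?_
    rw [← Finset.sum_add_distrib]
    exact Finset.sum_eq_zero fun y _ => by ring
  linarith

lemma my_lap_nonpos_at_max (ω : V → V → ℝ) (μ : V → ℝ)
    (hω : ∀ x y, 0 ≤ ω x y) (hμ : ∀ x, 0 < μ x) (f : V → ℝ) (x : V)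
    (hx : ∀ y, f y ≤ f x) : graphLap ω μ f x ≤ 0 := by
  unfold graphLap
  apply mul_nonpos_of_nonneg_of_nonpos
  · have := hμ x; positivity
  · exact Finset.sum_nonpos fun y _ =>
      mul_nonpos_of_nonneg_of_nonpos (hω x y) (by linarith [hx y])

lemma my_lap_add (ω : V → V → ℝ) (μ : V → ℝ) (f g : V → ℝ) (x : V) :
    graphLap ω μ (fun z => f z + g z) x = graphLap ω μ f x + graphLap ω μ g x := by
  unfold graphLap
  rw [← mul_add, ← Finset.sum_add_distrib]
  congr 1
  exact Finset.sum_congr rfl fun y _ => by ring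

end MyAux

lemma my_cont_integrand (G : ℝ → ℝ) (hG : ContDiffOn ℝ (⊤ : ℕ∞) G (Set.Ici 0)) :
    Continuous fun s : ℝ => 2 * s * G (s ^ 2) := by
  have h1 : ContinuousOn (fun s : ℝ => G (s ^ 2)) Set.univ := by
    apply hG.continuousOn.comp (continuous_pow 2).continuousOn
    intro s _
    exact sq_nonneg s
  have h2 : Continuous fun s : ℝ => G (s ^ 2) := continuousOn_univ.mp h1
  exact (continuous_const.mul continuous_id).mul h2

lemma my_primFun_neg (G : ℝ → ℝ) (hG : Continuous fun s : ℝ => 2 * s * G (s ^ 2))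
    (hGpos : ∀ s, 0 ≤ s → 0 < G s) {t : ℝ} (ht : 1 < t) : primFun G t < 0 := by
  unfold primFun
  have h1 : (1 : ℝ) < Real.sqrt t := by
    rw [show (1 : ℝ) = Real.sqrt 1 by simp]
    exact Real.sqrt_lt_sqrt (by norm_num) ht
  rw [intervalIntegral.integral_symm]
  have hpos : 0 < ∫ s in (1 : ℝ)..(Real.sqrt t), 2 * s * G (s ^ 2) := by
    apply intervalIntegral.intervalIntegral_pos_of_pos_on
    · exact hG.intervalIntegrable _ _
    · intro s hs
      have hs0 : 0 < s := lt_trans one_pos hs.1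
      have := hGpos (s ^ 2) (sq_nonneg s)
      positivity
    · exact h1
  linarith

lemma my_primFun_nonneg (G : ℝ → ℝ) (hGpos : ∀ s, 0 ≤ s → 0 < G s)
    {t : ℝ} (ht1 : t ≤ 1) : 0 ≤ primFun G t := by
  unfold primFun
  apply intervalIntegral.integral_nonneg (Real.sqrt_le_one.mpr ht1)
  intro s hs
  have hs0 : 0 ≤ s := le_trans (Real.sqrt_nonneg t) hs.1
  have := hGpos (s ^ 2) (sq_nonneg s)
  positivity

lemma my_primFun_le (G : ℝ → ℝ) (hG : Continuous fun s : ℝ => 2 * s * G (s ^ 2))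
    (hGpos : ∀ s, 0 ≤ s → 0 < G s) (hGmono : StrictMonoOn G (Set.Ici 0))
    {t : ℝ} (ht0 : 0 < t) (ht1 : t ≤ 1) : primFun G t ≤ G 1 := by
  unfold primFun
  have hab : Real.sqrt t ≤ 1 := Real.sqrt_le_one.mpr ht1
  have hmain : (∫ s in Real.sqrt t..1, 2 * s * G (s ^ 2))
      ≤ ∫ s in Real.sqrt t..1, 2 * s * G 1 := by
    apply intervalIntegral.integral_mono_on hab (hG.intervalIntegrable _ _)
      ((by continuity : Continuous fun s : ℝ => 2 * s * G 1).intervalIntegrable _ _)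
    intro s hs
    have hs0 : 0 ≤ s := le_trans (Real.sqrt_nonneg t) hs.1
    have hs1 : s ^ 2 ≤ 1 := by nlinarith [hs.2]
    have hle : G (s ^ 2) ≤ G 1 :=
      hGmono.monotoneOn (Set.mem_Ici.mpr (sq_nonneg s)) (Set.mem_Ici.mpr zero_le_one) hs1
    nlinarith
  have hcalc : (∫ s in Real.sqrt t..1, 2 * s * G 1) = (1 - t) * G 1 := by
    rw [intervalIntegral.integral_mul_const, intervalIntegral.integral_const_mul,
      integral_id, Real.sq_sqrt ht0.le]
    ring
  have hG1 := hGpos 1 zero_le_one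
  nlinarith

theorem stmt_0
    {V : Type*} [Fintype V] [DecidableEq V]
    (hV : 1 < Fintype.card V)
    (ω : V → V → ℝ) (μ : V → ℝ)
    (hω_nonneg : ∀ x y, 0 ≤ ω x y)
    (hω_symm : ∀ x y, ω x y = ω y x)
    (hω_diag : ∀ x, ω x x = 0)
    (hconn : ∀ x y : V, x ≠ y → ∃ (n : ℕ) (c : Fin (n + 1) → V),
      c 0 = x ∧ c (Fin.last n) = y ∧ ∀ i : Fin n, 0 < ω (c i.castSucc) (c i.succ))
    (hμ : ∀ x, 0 < μ x)
    (G H : ℝ → ℝ)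
    (hGpos : ∀ s, 0 ≤ s → 0 < G s) (hHpos : ∀ s, 0 ≤ s → 0 < H s)
    (hGmono : StrictMonoOn G (Set.Ici 0)) (hHmono : StrictMonoOn H (Set.Ici 0))
    (hGsmooth : ContDiffOn ℝ (⊤ : ℕ∞) G (Set.Ici 0)) (hHsmooth : ContDiffOn ℝ (⊤ : ℕ∞) H (Set.Ici 0))
    (N1 N2 : ℕ) (hN1 : 0 < N1) (hN2 : 0 < N2)
    (p1 : Fin N1 → V) (p2 : Fin N2 → V)
    (u₀ v₀ : V → ℝ)
    (hu₀ : ∀ x, graphLap ω μ u₀ x =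
      -(4 * Real.pi * N1) / graphVol μ + 4 * Real.pi * ∑ j, diracDelta μ (p1 j) x)
    (hv₀ : ∀ x, graphLap ω μ v₀ x =
      -(4 * Real.pi * N2) / graphVol μ + 4 * Real.pi * ∑ j, diracDelta μ (p2 j) x)
    (lam : ℝ) (hlam : 0 < lam) (u v : V → ℝ)
    (hsol : isSolution ω μ G H N1 N2 u₀ v₀ lam u v) :
    4 * Real.pi * max (N1 : ℝ) N2 / (G 1 * H 1 * graphVol μ) ≤ lam := by
  have hNE : Nonempty V := Fintype.card_pos_iff.mp (by omega)
  have hvolpos : 0 < graphVol μ := Finset.sum_pos (fun x _ => hμ x) Finset.univ_nonempty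
  have hGcont := my_cont_integrand G hGsmooth
  have hHcont := my_cont_integrand H hHsmooth
  have hG1 : 0 < G 1 := hGpos 1 zero_le_one
  have hH1 : 0 < H 1 := hHpos 1 zero_le_one
  -- exp(u₀+u) ≤ 1 everywhere
  obtain ⟨xu, hxu⟩ := Finite.exists_max (fun x => u₀ x + u x)
  obtain ⟨xv, hxv⟩ := Finite.exists_max (fun x => v₀ x + v x)
  have hdelta : ∀ (N : ℕ) (p : Fin N → V) (z : V), 0 ≤ ∑ j, diracDelta μ (p j) z := by
    intro N p z
    apply Finset.sum_nonneg
    intro j _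
    unfold diracDelta
    split
    · have := hμ (p j); positivity
    · exact le_refl 0
  -- exp(u₀+u) ≤ 1 everywhere
  have hexp_u : ∀ x, Real.exp (u₀ x + u x) ≤ 1 := by
    have hlap := my_lap_nonpos_at_max ω μ hω_nonneg hμ (fun z => u₀ z + u z) xu hxu
    rw [my_lap_add ω μ u₀ u xu] at hlap
    have h3 := (hsol xu).1
    have h4 := hu₀ xu
    have hd := hdelta N1 p1 xu
    have hd4 : 0 ≤ 4 * Real.pi * ∑ j, diracDelta μ (p1 j) xu :=
      mul_nonneg (by positivity) hd
    have hP : 0 ≤ lam * Real.exp (v₀ xu + v xu) * H (Real.exp (v₀ xu + v xu)) *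
        primFun G (Real.exp (u₀ xu + u xu)) := by
      have hcomb : 4 * Real.pi * (∑ j, diracDelta μ (p1 j) xu) -
          lam * Real.exp (v₀ xu + v xu) * H (Real.exp (v₀ xu + v xu)) *
            primFun G (Real.exp (u₀ xu + u xu)) ≤ 0 := by
        rw [h3, h4, neg_div] at hlap
        linarith
      linarith
    have hgnn : 0 ≤ primFun G (Real.exp (u₀ xu + u xu)) := by
      by_contra hneg
      push_neg at hneg
      have hE : (0:ℝ) < Real.exp (v₀ xu + v xu) := Real.exp_pos _
      have hH' : 0 < H (Real.exp (v₀ xu + v xu)) := hHpos _ hE.le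
      have := mul_neg_of_pos_of_neg (mul_pos (mul_pos hlam hE) hH') hneg
      linarith
    have hx1 : Real.exp (u₀ xu + u xu) ≤ 1 := by
      by_contra hgt
      push_neg at hgt
      exact absurd hgnn (not_le.mpr (my_primFun_neg G hGcont hGpos hgt))
    intro x
    calc Real.exp (u₀ x + u x) ≤ Real.exp (u₀ xu + u xu) := Real.exp_le_exp.mpr (hxu x)
      _ ≤ 1 := hx1
  -- exp(v₀+v) ≤ 1 everywhere
  have hexp_v : ∀ x, Real.exp (v₀ x + v x) ≤ 1 := by
    have hlap := my_lap_nonpos_at_max ω μ hω_nonneg hμ (fun z => v₀ z + v z) xv hxv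
    rw [my_lap_add ω μ v₀ v xv] at hlap
    have h3 := (hsol xv).2
    have h4 := hv₀ xv
    have hd := hdelta N2 p2 xv
    have hd4 : 0 ≤ 4 * Real.pi * ∑ j, diracDelta μ (p2 j) xv :=
      mul_nonneg (by positivity) hd
    have hP : 0 ≤ lam * Real.exp (u₀ xv + u xv) * G (Real.exp (u₀ xv + u xv)) *
        primFun H (Real.exp (v₀ xv + v xv)) := by
      have hcomb : 4 * Real.pi * (∑ j, diracDelta μ (p2 j) xv) -
          lam * Real.exp (u₀ xv + u xv) * G (Real.exp (u₀ xv + u xv)) *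
            primFun H (Real.exp (v₀ xv + v xv)) ≤ 0 := by
        rw [h3, h4, neg_div] at hlap
        linarith
      linarith
    have hgnn : 0 ≤ primFun H (Real.exp (v₀ xv + v xv)) := by
      by_contra hneg
      push_neg at hneg
      have hE : (0:ℝ) < Real.exp (u₀ xv + u xv) := Real.exp_pos _
      have hG' : 0 < G (Real.exp (u₀ xv + u xv)) := hGpos _ hE.le
      have := mul_neg_of_pos_of_neg (mul_pos (mul_pos hlam hE) hG') hneg
      linarith
    have hx1 : Real.exp (v₀ xv + v xv) ≤ 1 := by
      by_contra hgt
      push_neg at hgt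
      exact absurd hgnn (not_le.mpr (my_primFun_neg H hHcont hHpos hgt))
    intro x
    calc Real.exp (v₀ x + v x) ≤ Real.exp (v₀ xv + v xv) := Real.exp_le_exp.mpr (hxv x)
      _ ≤ 1 := hx1
  -- integral identity and bound for the first equation
  have key : ∀ (N : ℕ) (w₀ w z₀ z : V → ℝ) (K L : ℝ → ℝ),
      (∀ x, graphLap ω μ w x =
        -lam * Real.exp (z₀ x + z x) * L (Real.exp (z₀ x + z x)) *
          primFun K (Real.exp (w₀ x + w x)) + 4 * Real.pi * N / graphVol μ) →
      (∀ x, Real.exp (w₀ x + w x) ≤ 1) → (∀ x, Real.exp (z₀ x + z x) ≤ 1) →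
      (∀ s, 0 ≤ s → 0 < K s) → (∀ s, 0 ≤ s → 0 < L s) →
      StrictMonoOn K (Set.Ici 0) → StrictMonoOn L (Set.Ici 0) →
      (Continuous fun s : ℝ => 2 * s * K (s ^ 2)) →
      4 * Real.pi * N ≤ lam * (K 1 * L 1 * graphVol μ) := by
    intro N w₀ w z₀ z K L heq hw1 hz1 hKpos hLpos hKmono hLmono hKcont
    set F : V → ℝ := fun x => Real.exp (z₀ x + z x) * L (Real.exp (z₀ x + z x)) *
      primFun K (Real.exp (w₀ x + w x)) with hF
    have hK1 : 0 < K 1 := hKpos 1 zero_le_one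
    have hL1 : 0 < L 1 := hLpos 1 zero_le_one
    have hFle : ∀ x, F x ≤ K 1 * L 1 := by
      intro x
      have hEb : (0:ℝ) < Real.exp (z₀ x + z x) := Real.exp_pos _
      have hLle : L (Real.exp (z₀ x + z x)) ≤ L 1 :=
        hLmono.monotoneOn (Set.mem_Ici.mpr hEb.le) (Set.mem_Ici.mpr zero_le_one) (hz1 x)
      have hLpos' : 0 < L (Real.exp (z₀ x + z x)) := hLpos _ hEb.le
      have hEa : (0:ℝ) < Real.exp (w₀ x + w x) := Real.exp_pos _
      have hPnn : 0 ≤ primFun K (Real.exp (w₀ x + w x)) := my_primFun_nonneg K hKpos (hw1 x)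
      have hPle : primFun K (Real.exp (w₀ x + w x)) ≤ K 1 :=
        my_primFun_le K hKcont hKpos hKmono hEa (hw1 x)
      have h1 : Real.exp (z₀ x + z x) * L (Real.exp (z₀ x + z x)) ≤ L 1 :=
        le_trans (mul_le_of_le_one_left hLpos'.le (hz1 x)) hLle
      calc F x ≤ L 1 * primFun K (Real.exp (w₀ x + w x)) :=
            mul_le_mul_of_nonneg_right h1 hPnn
        _ ≤ L 1 * K 1 := mul_le_mul_of_nonneg_left hPle hL1.le
        _ = K 1 * L 1 := mul_comm _ _
    have hsum0 := my_sum_mul_lap ω μ hω_symm hμ w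
    have hId : lam * ∑ x, μ x * F x = 4 * Real.pi * N := by
      have h0 : ∑ x, μ x * (-lam * F x + 4 * Real.pi * N / graphVol μ) = 0 := by
        rw [← hsum0]
        refine Finset.sum_congr rfl fun x _ => ?_
        rw [heq x, hF]
        ring_nf
      have hsplit : ∑ x, μ x * (-lam * F x + 4 * Real.pi * N / graphVol μ) =
          -(lam * ∑ x, μ x * F x) + graphVol μ * (4 * Real.pi * N / graphVol μ) := by
        simp only [mul_add]
        rw [Finset.sum_add_distrib]
        congr 1
        · rw [Finset.mul_sum, ← Finset.sum_neg_distrib]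
          exact Finset.sum_congr rfl fun x _ => by ring
        · rw [graphVol, Finset.sum_mul]
      rw [hsplit] at h0
      have hv : graphVol μ * (4 * Real.pi * N / graphVol μ) = 4 * Real.pi * N := by
        field_simp
      rw [hv] at h0
      linarith
    have hsumle : ∑ x, μ x * F x ≤ K 1 * L 1 * graphVol μ := by
      have : ∑ x, μ x * F x ≤ ∑ x, μ x * (K 1 * L 1) :=
        Finset.sum_le_sum fun x _ => mul_le_mul_of_nonneg_left (hFle x) (hμ x).le
      calc ∑ x, μ x * F x ≤ ∑ x, μ x * (K 1 * L 1) := this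
        _ = K 1 * L 1 * graphVol μ := by rw [graphVol, ← Finset.sum_mul]; ring
    calc 4 * Real.pi * N = lam * ∑ x, μ x * F x := hId.symm
      _ ≤ lam * (K 1 * L 1 * graphVol μ) := mul_le_mul_of_nonneg_left hsumle hlam.le
  have key1 : 4 * Real.pi * N1 ≤ lam * (G 1 * H 1 * graphVol μ) :=
    key N1 u₀ u v₀ v G H (fun x => (hsol x).1) hexp_u hexp_v hGpos hHpos hGmono hHmono hGcont
  have key2 : 4 * Real.pi * N2 ≤ lam * (H 1 * G 1 * graphVol μ) :=
    key N2 v₀ v u₀ u H G (fun x => (hsol x).2) hexp_v hexp_u hHpos hGpos hHmono hGmono hHcont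
  rw [div_le_iff₀ (by positivity)]
  rcases max_cases (N1 : ℝ) (N2 : ℝ) with ⟨hm, _⟩ | ⟨hm, _⟩
  · rw [hm]; linarith
  · rw [hm]; nlinarith
end

section
/- If c1, c2 ∈ ℝ satisfy u₀(x) < c1 and v₀(x) < c2 for all x ∈ V, then there exists λ₀ > 0 such that for every λ ≥ λ₀ the constant pair (u₋, v₋) = (−c1, −c2) is a lower solution of (S_λ). -/
open Real Finset

lemma primFun_pos (F : ℝ → ℝ) (hFc : ContinuousOn F (Set.Ici 0))
    (hFpos : ∀ s, 0 ≤ s → 0 < F s) {t : ℝ} (ht0 : 0 ≤ t) (ht1 : t < 1) :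
    0 < primFun F t := by
  have hlt : Real.sqrt t < 1 := by
    rw [show (1:ℝ) = Real.sqrt 1 by simp]
    exact Real.sqrt_lt_sqrt ht0 ht1
  have hcont : ContinuousOn (fun s : ℝ => 2 * s * F (s ^ 2)) (Set.uIcc (Real.sqrt t) 1) := by
    apply ContinuousOn.mul (by fun_prop)
    exact hFc.comp (by fun_prop) (fun s _ => sq_nonneg s)
  apply intervalIntegral.intervalIntegral_pos_of_pos_on
  · exact hcont.intervalIntegrable
  · intro s hs
    have hs0 : 0 < s := lt_of_le_of_lt (Real.sqrt_nonneg t) hs.1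
    have hF := hFpos (s ^ 2) (sq_nonneg s)
    positivity
  · exact hlt

theorem stmt_1
    {V : Type*} [Fintype V] [DecidableEq V]
    (hV : 1 < Fintype.card V)
    (ω : V → V → ℝ) (μ : V → ℝ)
    (hω_nonneg : ∀ x y, 0 ≤ ω x y)
    (hω_symm : ∀ x y, ω x y = ω y x)
    (hω_diag : ∀ x, ω x x = 0)
    (hconn : ∀ x y : V, x ≠ y → ∃ (n : ℕ) (c : Fin (n + 1) → V),
      c 0 = x ∧ c (Fin.last n) = y ∧ ∀ i : Fin n, 0 < ω (c i.castSucc) (c i.succ))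
    (hμ : ∀ x, 0 < μ x)
    (G H : ℝ → ℝ)
    (hGpos : ∀ s, 0 ≤ s → 0 < G s) (hHpos : ∀ s, 0 ≤ s → 0 < H s)
    (hGmono : StrictMonoOn G (Set.Ici 0)) (hHmono : StrictMonoOn H (Set.Ici 0))
    (hGsmooth : ContDiffOn ℝ (⊤ : ℕ∞) G (Set.Ici 0)) (hHsmooth : ContDiffOn ℝ (⊤ : ℕ∞) H (Set.Ici 0))
    (N1 N2 : ℕ) (hN1 : 0 < N1) (hN2 : 0 < N2)
    (p1 : Fin N1 → V) (p2 : Fin N2 → V)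
    (u₀ v₀ : V → ℝ)
    (hu₀ : ∀ x, graphLap ω μ u₀ x =
      -(4 * Real.pi * N1) / graphVol μ + 4 * Real.pi * ∑ j, diracDelta μ (p1 j) x)
    (hv₀ : ∀ x, graphLap ω μ v₀ x =
      -(4 * Real.pi * N2) / graphVol μ + 4 * Real.pi * ∑ j, diracDelta μ (p2 j) x)
    (c1 c2 : ℝ) (hc1 : ∀ x, u₀ x < c1) (hc2 : ∀ x, v₀ x < c2) :
    ∃ lam0 : ℝ, 0 < lam0 ∧ ∀ lam : ℝ, lam0 ≤ lam →
      isLowerSolution ω μ G H N1 N2 u₀ v₀ lam (fun _ => -c1) (fun _ => -c2) := by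
  haveI : Nonempty V := Fintype.card_pos_iff.mp (by omega)
  have hVol : 0 < graphVol μ := Finset.sum_pos (fun x _ => hμ x) Finset.univ_nonempty
  have hLap0 : ∀ (c : ℝ) (x : V), graphLap ω μ (fun _ => c) x = 0 := by
    intro c x; simp [graphLap]
  -- positivity of the two products
  set A1 : V → ℝ := fun x =>
    Real.exp (v₀ x + -c2) * H (Real.exp (v₀ x + -c2)) * primFun G (Real.exp (u₀ x + -c1))
  set A2 : V → ℝ := fun x =>
    Real.exp (u₀ x + -c1) * G (Real.exp (u₀ x + -c1)) * primFun H (Real.exp (v₀ x + -c2))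
  have hexp1 : ∀ x, Real.exp (u₀ x + -c1) < 1 := by
    intro x; rw [Real.exp_lt_one_iff]; linarith [hc1 x]
  have hexp2 : ∀ x, Real.exp (v₀ x + -c2) < 1 := by
    intro x; rw [Real.exp_lt_one_iff]; linarith [hc2 x]
  have hA1 : ∀ x, 0 < A1 x := by
    intro x
    have h1 := hHpos (Real.exp (v₀ x + -c2)) (Real.exp_pos _).le
    have h2 := primFun_pos G (hGsmooth.continuousOn) hGpos (Real.exp_pos _).le (hexp1 x)
    positivity
  have hA2 : ∀ x, 0 < A2 x := by
    intro x
    have h1 := hGpos (Real.exp (u₀ x + -c1)) (Real.exp_pos _).le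
    have h2 := primFun_pos H (hHsmooth.continuousOn) hHpos (Real.exp_pos _).le (hexp2 x)
    positivity
  set B : V → ℝ := fun x =>
    max (4 * Real.pi * N1 / graphVol μ / A1 x) (4 * Real.pi * N2 / graphVol μ / A2 x)
  refine ⟨max 1 (Finset.univ.sup' Finset.univ_nonempty B), lt_of_lt_of_le one_pos (le_max_left _ _), ?_⟩
  intro lam hlam x
  have hlamB : B x ≤ lam :=
    le_trans (le_trans (Finset.le_sup' B (Finset.mem_univ x)) (le_max_right _ _)) hlam
  constructor
  · rw [hLap0]
    have h1 : 4 * Real.pi * N1 / graphVol μ / A1 x ≤ lam :=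
      le_trans (le_max_left _ _) hlamB
    have := (div_le_iff₀ (hA1 x)).mp h1
    simp only [A1] at this
    beta_reduce
    nlinarith
  · rw [hLap0]
    have h2 : 4 * Real.pi * N2 / graphVol μ / A2 x ≤ lam :=
      le_trans (le_max_right _ _) hlamB
    have := (div_le_iff₀ (hA2 x)).mp h2
    simp only [A2] at this
    beta_reduce
    nlinarith
end

section
/- There exists λ₀ > 0 such that for every λ ≥ λ₀ the system (S_λ) admits a solution. -/
open Real Finset

lemma primFun_eq_integral (G : ℝ → ℝ) (hG : ContinuousOn G (Set.Ici 0)) {t : ℝ} (ht : 0 ≤ t) :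
    primFun G t = ∫ s in t..(1:ℝ), G s := by
  have hsub : (fun s : ℝ => s ^ 2) '' (Set.uIcc (Real.sqrt t) 1) ⊆ Set.Ici 0 := by
    rintro x ⟨s, _, rfl⟩; exact sq_nonneg s
  have h := intervalIntegral.integral_comp_smul_deriv' (a := Real.sqrt t) (b := 1)
      (f := fun s => s ^ 2) (f' := fun s => 2 * s) (g := G)
      (fun x _ => by simpa [two_mul] using (hasDerivAt_pow 2 x).congr_deriv (by ring))
      (by fun_prop) (hG.mono hsub)
  simp only [Function.comp, smul_eq_mul] at h
  rw [primFun]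
  rw [show (∫ s in Real.sqrt t..(1:ℝ), 2 * s * G (s ^ 2))
      = ∫ s in Real.sqrt t..(1:ℝ), 2 * s * G ((fun s:ℝ => s^2) s) from rfl] at *
  rw [h, Real.sq_sqrt ht, one_pow]

lemma primFun_one (G : ℝ → ℝ) : primFun G 1 = 0 := by
  rw [primFun, Real.sqrt_one, intervalIntegral.integral_same]

lemma intInt (G : ℝ → ℝ) (hG : ContinuousOn G (Set.Ici 0)) {a b : ℝ} (ha : 0 ≤ a) (hb : 0 ≤ b) :
    IntervalIntegrable G MeasureTheory.volume a b := by
  apply (hG.mono ?_).intervalIntegrable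
  intro x hx
  rcases Set.mem_uIcc.mp hx with h | h
  · exact le_trans ha h.1
  · exact le_trans hb h.1

lemma primFun_nonneg (G : ℝ → ℝ) (hG : ContinuousOn G (Set.Ici 0))
    (hGpos : ∀ s, 0 ≤ s → 0 < G s) {t : ℝ} (ht : 0 ≤ t) (ht1 : t ≤ 1) :
    0 ≤ primFun G t := by
  rw [primFun_eq_integral G hG ht]
  apply intervalIntegral.integral_nonneg ht1
  intro u hu; exact (hGpos u (le_trans ht hu.1)).le

lemma primFun_pos_s2 (G : ℝ → ℝ) (hG : ContinuousOn G (Set.Ici 0))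
    (hGpos : ∀ s, 0 ≤ s → 0 < G s) {t : ℝ} (ht : 0 ≤ t) (ht1 : t < 1) :
    0 < primFun G t := by
  rw [primFun_eq_integral G hG ht]
  apply intervalIntegral.intervalIntegral_pos_of_pos_on (intInt G hG ht zero_le_one)
  · intro u hu; exact hGpos u (le_trans ht hu.1.le)
  · exact ht1

/-- difference formula: primFun G a' - primFun G a = ∫_{a'}^{a} G for 0 ≤ a', a -/
lemma primFun_sub (G : ℝ → ℝ) (hG : ContinuousOn G (Set.Ici 0)) {a' a : ℝ}
    (ha' : 0 ≤ a') (ha : 0 ≤ a) :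
    primFun G a' - primFun G a = ∫ s in a'..a, G s := by
  rw [primFun_eq_integral G hG ha', primFun_eq_integral G hG ha]
  have h := intervalIntegral.integral_add_adjacent_intervals
    (intInt G hG ha' ha) (intInt G hG ha zero_le_one)
  linarith [h]

/-- monotone: a' ≤ a implies primFun G a ≤ primFun G a' -/
lemma primFun_anti (G : ℝ → ℝ) (hG : ContinuousOn G (Set.Ici 0))
    (hGpos : ∀ s, 0 ≤ s → 0 < G s) {a' a : ℝ} (ha' : 0 ≤ a') (haa : a' ≤ a) :
    primFun G a ≤ primFun G a' := by
  have h := primFun_sub G hG ha' (le_trans ha' haa)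
  have : 0 ≤ ∫ s in a'..a, G s := by
    apply intervalIntegral.integral_nonneg haa
    intro u hu; exact (hGpos u (le_trans ha' hu.1)).le
  linarith

/-- Lipschitz-type bound on [0,1] -/
lemma primFun_lip (G : ℝ → ℝ) (hG : ContinuousOn G (Set.Ici 0))
    (hGpos : ∀ s, 0 ≤ s → 0 < G s) (hGmono : MonotoneOn G (Set.Ici 0))
    {a' a : ℝ} (ha' : 0 ≤ a') (ha : a ≤ 1) (haa : a' ≤ a) :
    primFun G a' - primFun G a ≤ (a - a') * G 1 := by
  rw [primFun_sub G hG ha' (le_trans ha' haa)]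
  have hmono := intervalIntegral.integral_mono_on (a := a') (b := a) (f := G)
    (g := fun _ => G 1) (μ := MeasureTheory.volume) haa
    (intInt G hG ha' (le_trans ha' haa)) intervalIntegrable_const
    (fun x hx => hGmono (Set.mem_Ici.mpr (le_trans ha' hx.1)) (Set.mem_Ici.mpr zero_le_one) (le_trans hx.2 ha))
  simpa using hmono

lemma primFun_tendsto (G : ℝ → ℝ) (hG : ContinuousOn G (Set.Ici 0))
    (hGpos : ∀ s, 0 ≤ s → 0 < G s) (hGmono : MonotoneOn G (Set.Ici 0))
    {a : ℕ → ℝ} {l : ℝ} (h0 : ∀ n, 0 ≤ a n) (h1 : ∀ n, a n ≤ 1)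
    (hl0 : 0 ≤ l) (hl1 : l ≤ 1)
    (hT : Filter.Tendsto a Filter.atTop (nhds l)) :
    Filter.Tendsto (fun n => primFun G (a n)) Filter.atTop (nhds (primFun G l)) := by
  rw [← tendsto_sub_nhds_zero_iff]
  have habs : ∀ n, ‖primFun G (a n) - primFun G l‖ ≤ G 1 * |l - a n| := by
    intro n
    rcases le_total (a n) l with h | h
    · have hb := primFun_lip G hG hGpos hGmono (h0 n) hl1 h
      have hnn : 0 ≤ primFun G (a n) - primFun G l :=
        sub_nonneg.mpr (primFun_anti G hG hGpos (h0 n) h)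
      rw [Real.norm_eq_abs, abs_of_nonneg hnn, abs_of_nonneg (by linarith)]
      linarith
    · have hb := primFun_lip G hG hGpos hGmono hl0 (h1 n) h
      have hnn : primFun G (a n) - primFun G l ≤ 0 :=
        sub_nonpos.mpr (primFun_anti G hG hGpos hl0 h)
      rw [Real.norm_eq_abs, abs_of_nonpos hnn, abs_of_nonpos (by linarith)]
      linarith
  apply squeeze_zero_norm habs
  have : Filter.Tendsto (fun n => l - a n) Filter.atTop (nhds 0) := by
    simpa using ((tendsto_const_nhds (x := l)).sub hT)
  simpa using (this.abs.const_mul (G 1))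

/-- Discrete maximum principle. -/
lemma graph_maxp {V : Type*} [Fintype V] [Nonempty V] (ω : V → V → ℝ) (μ : V → ℝ)
    (hω : ∀ x y, 0 ≤ ω x y) (hμ : ∀ x, 0 < μ x) {K : ℝ} (hK : 0 < K) (f : V → ℝ)
    (h : ∀ x, 0 ≤ graphLap ω μ f x - K * f x) : ∀ x, f x ≤ 0 := by
  obtain ⟨x0, hx0⟩ := Finite.exists_max f
  suffices hs : f x0 ≤ 0 by intro x; exact le_trans (hx0 x) hs
  have hlap : graphLap ω μ f x0 ≤ 0 := by
    apply mul_nonpos_of_nonneg_of_nonpos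
    · exact (one_div_pos.mpr (hμ x0)).le
    · apply Finset.sum_nonpos
      intro y _
      exact mul_nonpos_of_nonneg_of_nonpos (hω x0 y) (by linarith [hx0 y])
  nlinarith [h x0]

/-- The operator `Δ - K` as a linear map. -/
noncomputable def lapK {V : Type*} [Fintype V] (ω : V → V → ℝ) (μ : V → ℝ) (K : ℝ) :
    (V → ℝ) →ₗ[ℝ] (V → ℝ) where
  toFun f := fun x => graphLap ω μ f x - K * f x
  map_add' f g := by
    funext x
    have hs : ∑ y, ω x y * ((f y + g y) - (f x + g x))
        = ∑ y, ω x y * (f y - f x) + ∑ y, ω x y * (g y - g x) := by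
      rw [← Finset.sum_add_distrib]
      exact Finset.sum_congr rfl fun y _ => by ring
    simp only [graphLap, Pi.add_apply]
    rw [hs]; ring
  map_smul' c f := by
    funext x
    have hs : ∑ y, ω x y * (c * f y - c * f x) = c * ∑ y, ω x y * (f y - f x) := by
      rw [Finset.mul_sum]
      exact Finset.sum_congr rfl fun y _ => by ring
    simp only [graphLap, Pi.smul_apply, smul_eq_mul, RingHom.id_apply]
    rw [hs]; ring

lemma lapK_apply {V : Type*} [Fintype V] (ω : V → V → ℝ) (μ : V → ℝ) (K : ℝ) (f : V → ℝ)
    (x : V) : lapK ω μ K f x = graphLap ω μ f x - K * f x := rfl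

lemma lapK_bij {V : Type*} [Fintype V] [Nonempty V] (ω : V → V → ℝ) (μ : V → ℝ)
    (hω : ∀ x y, 0 ≤ ω x y) (hμ : ∀ x, 0 < μ x) {K : ℝ} (hK : 0 < K) :
    Function.Bijective (lapK ω μ K) := by
  have hinj : Function.Injective (lapK ω μ K) := by
    rw [← LinearMap.ker_eq_bot, LinearMap.ker_eq_bot']
    intro f hf
    have h1 : ∀ x, f x ≤ 0 := by
      apply graph_maxp ω μ hω hμ hK
      intro x
      have : lapK ω μ K f x = 0 := by rw [hf]; rfl
      rw [lapK_apply] at this; linarith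
    have h2 : ∀ x, (-f) x ≤ 0 := by
      apply graph_maxp ω μ hω hμ hK
      intro x
      have : lapK ω μ K (-f) x = 0 := by rw [map_neg, hf]; simp
      rw [lapK_apply] at this; linarith
    funext x
    have := h1 x; have := h2 x
    simp only [Pi.neg_apply, Pi.zero_apply] at *
    linarith
  exact ⟨hinj, LinearMap.injective_iff_surjective.mp hinj⟩

/-- The key comparison (monotonicity) estimate for the nonlinearity. -/
lemma comp_phi (G H : ℝ → ℝ) (hGc : ContinuousOn G (Set.Ici 0))
    (hGpos : ∀ s, 0 ≤ s → 0 < G s) (hGmono : MonotoneOn G (Set.Ici 0))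
    (hHpos : ∀ s, 0 ≤ s → 0 < H s) (hHmono : MonotoneOn H (Set.Ici 0))
    {lam K p p' q q' : ℝ} (hlam : 0 ≤ lam) (hK : lam * G 1 * H 1 ≤ K)
    (hp' : p' ≤ p) (hp : p ≤ 0) (hq' : q' ≤ q) (hq : q ≤ 0) :
    -lam * Real.exp q * H (Real.exp q) * primFun G (Real.exp p) - K * p ≤
      -lam * Real.exp q' * H (Real.exp q') * primFun G (Real.exp p') - K * p' := by
  set a' := Real.exp p' with ha'def
  set a := Real.exp p with hadef
  set b' := Real.exp q' with hb'def
  set b := Real.exp q with hbdef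
  have ha'pos : 0 < a' := Real.exp_pos _
  have hapos : 0 < a := Real.exp_pos _
  have hb'pos : 0 < b' := Real.exp_pos _
  have hbpos : 0 < b := Real.exp_pos _
  have ha1 : a ≤ 1 := Real.exp_le_one_iff.mpr hp
  have hb1 : b ≤ 1 := Real.exp_le_one_iff.mpr hq
  have haa : a' ≤ a := Real.exp_le_exp.mpr hp'
  have hbb : b' ≤ b := Real.exp_le_exp.mpr hq'
  set ga := primFun G a with hgadef
  set ga' := primFun G a' with hga'def
  have h1 : 0 ≤ ga := primFun_nonneg G hGc hGpos hapos.le ha1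
  have h2 : ga ≤ ga' := primFun_anti G hGc hGpos ha'pos.le haa
  have h3 : ga' - ga ≤ (a - a') * G 1 := primFun_lip G hGc hGpos hGmono ha'pos.le ha1 haa
  have h4 : a - a' ≤ p - p' := by
    have he : a' = a * Real.exp (p' - p) := by
      rw [ha'def, hadef, ← Real.exp_add]; ring_nf
    have hb := Real.add_one_le_exp (p' - p)
    nlinarith [Real.exp_pos (p' - p)]
  have hG1 : 0 < G 1 := hGpos 1 zero_le_one
  have hH1 : 0 < H 1 := hHpos 1 zero_le_one
  have hHb' : 0 < H b' := hHpos b' hb'pos.le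
  have hHb : 0 < H b := hHpos b hbpos.le
  have hHm : H b' ≤ H b := hHmono (Set.mem_Ici.mpr hb'pos.le) (Set.mem_Ici.mpr hbpos.le) hbb
  have hHm1 : H b ≤ H 1 := hHmono (Set.mem_Ici.mpr hbpos.le) (Set.mem_Ici.mpr zero_le_one) hb1
  have h5 : b' * H b' ≤ b * H b := mul_le_mul hbb hHm hHb'.le hbpos.le
  have h6 : b * H b ≤ H 1 := by nlinarith
  have hbH1 : b' * H b' ≤ H 1 := le_trans h5 h6
  have s1 : b' * H b' * (ga' - ga) ≤ H 1 * (ga' - ga) :=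
    mul_le_mul_of_nonneg_right hbH1 (by linarith)
  have s2 : H 1 * (ga' - ga) ≤ H 1 * ((a - a') * G 1) :=
    mul_le_mul_of_nonneg_left h3 hH1.le
  have s3 : (b' * H b' - b * H b) * ga ≤ 0 :=
    mul_nonpos_of_nonpos_of_nonneg (by linarith) h1
  have s4 : H 1 * ((a - a') * G 1) ≤ H 1 * ((p - p') * G 1) :=
    mul_le_mul_of_nonneg_left (mul_le_mul_of_nonneg_right h4 hG1.le) hH1.le
  have key : b' * H b' * ga' - b * H b * ga ≤ H 1 * ((p - p') * G 1) := by nlinarith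
  have key2 : lam * (b' * H b' * ga' - b * H b * ga) ≤ lam * (H 1 * ((p - p') * G 1)) :=
    mul_le_mul_of_nonneg_left key hlam
  have key3 : lam * (H 1 * ((p - p') * G 1)) ≤ K * (p - p') := by
    have : lam * (H 1 * ((p - p') * G 1)) = (lam * G 1 * H 1) * (p - p') := by ring
    rw [this]
    exact mul_le_mul_of_nonneg_right hK (by linarith)
  nlinarith

lemma maxp_compare {V : Type*} [Fintype V] [Nonempty V] (ω : V → V → ℝ) (μ : V → ℝ)
    (hω : ∀ x y, 0 ≤ ω x y) (hμ : ∀ x, 0 < μ x) {K : ℝ} (hK : 0 < K) (f g : V → ℝ)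
    (h : ∀ x, lapK ω μ K g x ≤ lapK ω μ K f x) : ∀ x, f x ≤ g x := by
  have hms : ∀ x, 0 ≤ graphLap ω μ (f - g) x - K * (f - g) x := by
    intro x
    have h2 : lapK ω μ K (f - g) x = lapK ω μ K f x - lapK ω μ K g x := by
      rw [map_sub]; rfl
    rw [lapK_apply] at h2
    have h3 := h x
    simp only [Pi.sub_apply] at h2 ⊢
    linarith
  have hfin := graph_maxp ω μ hω hμ hK (f - g) hms
  intro x
  have := hfin x
  simp only [Pi.sub_apply] at this
  linarith

lemma graphLap_neg {V : Type*} [Fintype V] (ω : V → V → ℝ) (μ : V → ℝ) (f : V → ℝ) (x : V) :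
    graphLap ω μ (fun y => -f y) x = -graphLap ω μ f x := by
  simp only [graphLap]
  have : ∑ y, ω x y * (-f y - -f x) = -∑ y, ω x y * (f y - f x) := by
    rw [← Finset.sum_neg_distrib]
    exact Finset.sum_congr rfl fun y _ => by ring
  rw [this]; ring

lemma graphLap_neg_sub_one {V : Type*} [Fintype V] (ω : V → V → ℝ) (μ : V → ℝ)
    (f : V → ℝ) (x : V) :
    graphLap ω μ (fun y => -f y - 1) x = -graphLap ω μ f x := by
  simp only [graphLap]
  have : ∑ y, ω x y * ((-f y - 1) - (-f x - 1)) = -∑ y, ω x y * (f y - f x) := by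
    rw [← Finset.sum_neg_distrib]
    exact Finset.sum_congr rfl fun y _ => by ring
  rw [this]; ring

theorem stmt_2
    {V : Type*} [Fintype V] [DecidableEq V]
    (hV : 1 < Fintype.card V)
    (ω : V → V → ℝ) (μ : V → ℝ)
    (hω_nonneg : ∀ x y, 0 ≤ ω x y)
    (hω_symm : ∀ x y, ω x y = ω y x)
    (hω_diag : ∀ x, ω x x = 0)
    (hconn : ∀ x y : V, x ≠ y → ∃ (n : ℕ) (c : Fin (n + 1) → V),
      c 0 = x ∧ c (Fin.last n) = y ∧ ∀ i : Fin n, 0 < ω (c i.castSucc) (c i.succ))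
    (hμ : ∀ x, 0 < μ x)
    (G H : ℝ → ℝ)
    (hGpos : ∀ s, 0 ≤ s → 0 < G s) (hHpos : ∀ s, 0 ≤ s → 0 < H s)
    (hGmono : StrictMonoOn G (Set.Ici 0)) (hHmono : StrictMonoOn H (Set.Ici 0))
    (hGsmooth : ContDiffOn ℝ (⊤ : ℕ∞) G (Set.Ici 0)) (hHsmooth : ContDiffOn ℝ (⊤ : ℕ∞) H (Set.Ici 0))
    (N1 N2 : ℕ) (hN1 : 0 < N1) (hN2 : 0 < N2)
    (p1 : Fin N1 → V) (p2 : Fin N2 → V)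
    (u₀ v₀ : V → ℝ)
    (hu₀ : ∀ x, graphLap ω μ u₀ x =
      -(4 * Real.pi * N1) / graphVol μ + 4 * Real.pi * ∑ j, diracDelta μ (p1 j) x)
    (hv₀ : ∀ x, graphLap ω μ v₀ x =
      -(4 * Real.pi * N2) / graphVol μ + 4 * Real.pi * ∑ j, diracDelta μ (p2 j) x)
 :
    ∃ lam0 : ℝ, 0 < lam0 ∧ ∀ lam : ℝ, lam0 ≤ lam →
      ∃ u v : V → ℝ, isSolution ω μ G H N1 N2 u₀ v₀ lam u v := by
  have hNe : Nonempty V := Fintype.card_pos_iff.mp (by omega)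
  have hπ : (0:ℝ) < Real.pi := Real.pi_pos
  have hGc : ContinuousOn G (Set.Ici 0) := hGsmooth.continuousOn
  have hHc : ContinuousOn H (Set.Ici 0) := hHsmooth.continuousOn
  have hGm : MonotoneOn G (Set.Ici 0) := hGmono.monotoneOn
  have hHm : MonotoneOn H (Set.Ici 0) := hHmono.monotoneOn
  set em : ℝ := Real.exp (-1) with hem
  have hem0 : 0 < em := Real.exp_pos _
  have hem1 : em < 1 := by
    rw [hem, show (1:ℝ) = Real.exp 0 by rw [Real.exp_zero]]
    exact Real.exp_lt_exp.mpr (by norm_num)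
  have hgE : 0 < primFun G em := primFun_pos_s2 G hGc hGpos hem0.le hem1
  have hhE : 0 < primFun H em := primFun_pos_s2 H hHc hHpos hem0.le hem1
  set ε1 : ℝ := em * H em * primFun G em with hε1
  set ε2 : ℝ := em * G em * primFun H em with hε2
  have hε1pos : 0 < ε1 := mul_pos (mul_pos hem0 (hHpos em hem0.le)) hgE
  have hε2pos : 0 < ε2 := mul_pos (mul_pos hem0 (hGpos em hem0.le)) hhE
  set S1 : ℝ := ∑ j : Fin N1, 1 / μ (p1 j) with hS1
  set S2 : ℝ := ∑ j : Fin N2, 1 / μ (p2 j) with hS2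
  have hS1nonneg : 0 ≤ S1 := Finset.sum_nonneg fun j _ => (one_div_pos.mpr (hμ _)).le
  have hS2nonneg : 0 ≤ S2 := Finset.sum_nonneg fun j _ => (one_div_pos.mpr (hμ _)).le
  set lam0 : ℝ := (4 * Real.pi * S1 + 1) / ε1 + (4 * Real.pi * S2 + 1) / ε2 with hlam0
  have hnum1 : 0 < 4 * Real.pi * S1 + 1 := by nlinarith
  have hnum2 : 0 < 4 * Real.pi * S2 + 1 := by nlinarith
  have hlam0pos : 0 < lam0 :=
    add_pos (div_pos hnum1 hε1pos) (div_pos hnum2 hε2pos)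
  refine ⟨lam0, hlam0pos, ?_⟩
  intro lam hlam
  have hlampos : 0 < lam := lt_of_lt_of_le hlam0pos hlam
  set K : ℝ := lam * G 1 * H 1 with hKdef
  have hKpos : 0 < K := by
    rw [hKdef]
    exact mul_pos (mul_pos hlampos (hGpos 1 zero_le_one)) (hHpos 1 zero_le_one)
  have hbij : Function.Bijective (lapK ω μ K) := lapK_bij ω μ hω_nonneg hμ hKpos
  set Einv : (V → ℝ) → (V → ℝ) := fun y => (Equiv.ofBijective _ hbij).symm y with hEinv
  have hLE : ∀ y : V → ℝ, lapK ω μ K (Einv y) = y := by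
    intro y
    rw [hEinv]
    exact Equiv.ofBijective_apply_symm_apply _ hbij y
  set c1 : ℝ := 4 * Real.pi * N1 / graphVol μ with hc1
  set c2 : ℝ := 4 * Real.pi * N2 / graphVol μ with hc2
  set D1 : V → ℝ := fun x => 4 * Real.pi * ∑ j, diracDelta μ (p1 j) x with hD1
  set D2 : V → ℝ := fun x => 4 * Real.pi * ∑ j, diracDelta μ (p2 j) x with hD2
  have hdirac_nonneg : ∀ (p x : V), 0 ≤ diracDelta μ p x := by
    intro p x
    rw [diracDelta]
    split
    · exact (one_div_pos.mpr (hμ p)).le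
    · exact le_rfl
  have hdirac_le : ∀ (p x : V), diracDelta μ p x ≤ 1 / μ p := by
    intro p x
    rw [diracDelta]
    split
    · exact le_rfl
    · exact (one_div_pos.mpr (hμ p)).le
  have hD1nonneg : ∀ x, 0 ≤ D1 x := by
    intro x
    simp only [hD1]
    exact mul_nonneg (by positivity) (Finset.sum_nonneg fun j _ => hdirac_nonneg _ _)
  have hD2nonneg : ∀ x, 0 ≤ D2 x := by
    intro x
    simp only [hD2]
    exact mul_nonneg (by positivity) (Finset.sum_nonneg fun j _ => hdirac_nonneg _ _)
  have hD1le : ∀ x, D1 x ≤ lam * ε1 := by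
    intro x
    have h1 : D1 x ≤ 4 * Real.pi * S1 := by
      simp only [hD1, hS1]
      exact mul_le_mul_of_nonneg_left
        (Finset.sum_le_sum fun j _ => hdirac_le _ _) (by positivity)
    have h2 : (4 * Real.pi * S1 + 1) / ε1 ≤ lam0 := by
      rw [hlam0]
      exact le_add_of_nonneg_right (div_pos hnum2 hε2pos).le
    have h3 : (4 * Real.pi * S1 + 1) = ((4 * Real.pi * S1 + 1) / ε1) * ε1 :=
      (div_mul_cancel₀ _ hε1pos.ne').symm
    have h4 : ((4 * Real.pi * S1 + 1) / ε1) * ε1 ≤ lam * ε1 :=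
      mul_le_mul_of_nonneg_right (le_trans h2 hlam) hε1pos.le
    linarith
  have hD2le : ∀ x, D2 x ≤ lam * ε2 := by
    intro x
    have h1 : D2 x ≤ 4 * Real.pi * S2 := by
      simp only [hD2, hS2]
      exact mul_le_mul_of_nonneg_left
        (Finset.sum_le_sum fun j _ => hdirac_le _ _) (by positivity)
    have h2 : (4 * Real.pi * S2 + 1) / ε2 ≤ lam0 := by
      rw [hlam0]
      exact le_add_of_nonneg_left (div_pos hnum1 hε1pos).le
    have h3 : (4 * Real.pi * S2 + 1) = ((4 * Real.pi * S2 + 1) / ε2) * ε2 :=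
      (div_mul_cancel₀ _ hε2pos.ne').symm
    have h4 : ((4 * Real.pi * S2 + 1) / ε2) * ε2 ≤ lam * ε2 :=
      mul_le_mul_of_nonneg_right (le_trans h2 hlam) hε2pos.le
    linarith
  -- the iteration
  set R1 : (V → ℝ) → (V → ℝ) → (V → ℝ) := fun f g => fun x =>
    -lam * Real.exp (v₀ x + g x) * H (Real.exp (v₀ x + g x)) *
      primFun G (Real.exp (u₀ x + f x)) - K * f x + c1 with hR1
  set R2 : (V → ℝ) → (V → ℝ) → (V → ℝ) := fun f g => fun x =>
    -lam * Real.exp (u₀ x + f x) * G (Real.exp (u₀ x + f x)) *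
      primFun H (Real.exp (v₀ x + g x)) - K * g x + c2 with hR2
  set stp : (V → ℝ) × (V → ℝ) → (V → ℝ) × (V → ℝ) := fun p =>
    (Einv (R1 p.1 p.2), Einv (R2 p.1 p.2)) with hstp
  set sq : ℕ → (V → ℝ) × (V → ℝ) := fun n => stp^[n] (fun x => -u₀ x, fun x => -v₀ x)
    with hsq
  have h0u : (sq 0).1 = fun x => -u₀ x := by
    simp only [hsq, Function.iterate_zero_apply]
  have h0v : (sq 0).2 = fun x => -v₀ x := by
    simp only [hsq, Function.iterate_zero_apply]
  have hsqS : ∀ n, sq (n + 1) = stp (sq n) := by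
    intro n
    simp only [hsq]
    exact Function.iterate_succ_apply' _ _ _
  have heq1 : ∀ n x, lapK ω μ K ((sq (n+1)).1) x = R1 (sq n).1 (sq n).2 x := by
    intro n x
    rw [hsqS n]
    show lapK ω μ K (Einv (R1 (sq n).1 (sq n).2)) x = _
    rw [hLE]
  have heq2 : ∀ n x, lapK ω μ K ((sq (n+1)).2) x = R2 (sq n).1 (sq n).2 x := by
    intro n x
    rw [hsqS n]
    show lapK ω μ K (Einv (R2 (sq n).1 (sq n).2)) x = _
    rw [hLE]
  -- comparison estimates
  have hcomp1 : ∀ f g f' g' : V → ℝ, (∀ x, f' x ≤ f x) → (∀ x, g' x ≤ g x) →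
      (∀ x, f x ≤ -u₀ x) → (∀ x, g x ≤ -v₀ x) → ∀ x, R1 f g x ≤ R1 f' g' x := by
    intro f g f' g' hf hg hfb hgb x
    have hc := comp_phi G H hGc hGpos hGm hHpos hHm (lam := lam) (K := K)
      (p := u₀ x + f x) (p' := u₀ x + f' x) (q := v₀ x + g x) (q' := v₀ x + g' x)
      hlampos.le hKdef.ge (by linarith [hf x]) (by linarith [hfb x])
      (by linarith [hg x]) (by linarith [hgb x])
    simp only [hR1]
    linarith
  have hcomp2 : ∀ f g f' g' : V → ℝ, (∀ x, f' x ≤ f x) → (∀ x, g' x ≤ g x) →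
      (∀ x, f x ≤ -u₀ x) → (∀ x, g x ≤ -v₀ x) → ∀ x, R2 f g x ≤ R2 f' g' x := by
    intro f g f' g' hf hg hfb hgb x
    have hc := comp_phi H G hHc hHpos hHm hGpos hGm (lam := lam) (K := K)
      (p := v₀ x + g x) (p' := v₀ x + g' x) (q := u₀ x + f x) (q' := u₀ x + f' x)
      hlampos.le (le_of_eq (by rw [hKdef]; ring)) (by linarith [hg x]) (by linarith [hgb x])
      (by linarith [hf x]) (by linarith [hfb x])
    simp only [hR2]
    linarith
  -- Laplacian values on the barriers
  have hlap0u : ∀ x, lapK ω μ K (fun y => -u₀ y) x = c1 - D1 x + K * u₀ x := by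
    intro x
    rw [lapK_apply, graphLap_neg, hu₀ x]
    simp only [hc1, hD1]
    ring
  have hlap0v : ∀ x, lapK ω μ K (fun y => -v₀ y) x = c2 - D2 x + K * v₀ x := by
    intro x
    rw [lapK_apply, graphLap_neg, hv₀ x]
    simp only [hc2, hD2]
    ring
  have hlapbu : ∀ x, lapK ω μ K (fun y => -u₀ y - 1) x = c1 - D1 x - K * (-u₀ x - 1) := by
    intro x
    rw [lapK_apply, graphLap_neg_sub_one, hu₀ x]
    simp only [hc1, hD1]
    ring
  have hlapbv : ∀ x, lapK ω μ K (fun y => -v₀ y - 1) x = c2 - D2 x - K * (-v₀ x - 1) := by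
    intro x
    rw [lapK_apply, graphLap_neg_sub_one, hv₀ x]
    simp only [hc2, hD2]
    ring
  -- value of R1 on the lower barrier pair
  have hRb1 : ∀ x, R1 (fun y => -u₀ y - 1) (fun y => -v₀ y - 1) x
      = -(lam * ε1) - K * (-u₀ x - 1) + c1 := by
    intro x
    simp only [hR1]
    rw [show v₀ x + (-v₀ x - 1) = -1 by ring, show u₀ x + (-u₀ x - 1) = -1 by ring]
    rw [hε1, hem]
    ring
  have hRb2 : ∀ x, R2 (fun y => -u₀ y - 1) (fun y => -v₀ y - 1) x
      = -(lam * ε2) - K * (-v₀ x - 1) + c2 := by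
    intro x
    simp only [hR2]
    rw [show v₀ x + (-v₀ x - 1) = -1 by ring, show u₀ x + (-u₀ x - 1) = -1 by ring]
    rw [hε2, hem]
    ring
  -- subsolution estimate
  have hsubu : ∀ f g : V → ℝ, (∀ x, -u₀ x - 1 ≤ f x) → (∀ x, -v₀ x - 1 ≤ g x) →
      (∀ x, f x ≤ -u₀ x) → (∀ x, g x ≤ -v₀ x) →
      ∀ x, R1 f g x ≤ lapK ω μ K (fun y => -u₀ y - 1) x := by
    intro f g hf hg hfb hgb x
    have h1 : R1 f g x ≤ R1 (fun y => -u₀ y - 1) (fun y => -v₀ y - 1) x :=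
      hcomp1 f g _ _ (fun y => hf y) (fun y => hg y) hfb hgb x
    rw [hRb1 x] at h1
    rw [hlapbu x]
    have := hD1le x
    linarith
  have hsubv : ∀ f g : V → ℝ, (∀ x, -u₀ x - 1 ≤ f x) → (∀ x, -v₀ x - 1 ≤ g x) →
      (∀ x, f x ≤ -u₀ x) → (∀ x, g x ≤ -v₀ x) →
      ∀ x, R2 f g x ≤ lapK ω μ K (fun y => -v₀ y - 1) x := by
    intro f g hf hg hfb hgb x
    have h1 : R2 f g x ≤ R2 (fun y => -u₀ y - 1) (fun y => -v₀ y - 1) x :=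
      hcomp2 f g _ _ (fun y => hf y) (fun y => hg y) hfb hgb x
    rw [hRb2 x] at h1
    rw [hlapbv x]
    have := hD2le x
    linarith
  -- main invariant
  have hgood : ∀ n, (∀ x, -u₀ x - 1 ≤ (sq n).1 x) ∧ (∀ x, (sq n).1 x ≤ -u₀ x) ∧
      (∀ x, (sq (n+1)).1 x ≤ (sq n).1 x) ∧
      (∀ x, -v₀ x - 1 ≤ (sq n).2 x) ∧ (∀ x, (sq n).2 x ≤ -v₀ x) ∧
      (∀ x, (sq (n+1)).2 x ≤ (sq n).2 x) := by
    intro n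
    induction n with
    | zero =>
      have hbaseR1 : ∀ x, R1 (sq 0).1 (sq 0).2 x = -K * ((sq 0).1 x) + c1 := by
        intro x
        rw [h0u, h0v]
        simp only [hR1]
        rw [show u₀ x + -u₀ x = 0 by ring, Real.exp_zero, primFun_one]
        ring
      have hbaseR2 : ∀ x, R2 (sq 0).1 (sq 0).2 x = -K * ((sq 0).2 x) + c2 := by
        intro x
        rw [h0u, h0v]
        simp only [hR2]
        rw [show v₀ x + -v₀ x = 0 by ring, Real.exp_zero, primFun_one]
        ring
      refine ⟨?_, ?_, ?_, ?_, ?_, ?_⟩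
      · intro x
        have := congrFun h0u x
        rw [this]; linarith
      · intro x
        have := congrFun h0u x
        rw [this]
      · apply maxp_compare ω μ hω_nonneg hμ hKpos
        intro x
        rw [heq1 0 x, hbaseR1 x, h0u, hlap0u x]
        have := hD1nonneg x
        simp only []
        linarith
      · intro x
        have := congrFun h0v x
        rw [this]; linarith
      · intro x
        have := congrFun h0v x
        rw [this]
      · apply maxp_compare ω μ hω_nonneg hμ hKpos
        intro x
        rw [heq2 0 x, hbaseR2 x, h0v, hlap0v x]
        have := hD2nonneg x
        simp only []
        linarith
    | succ n ih =>
      obtain ⟨h1, h2, h3, h4, h5, h6⟩ := ih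
      have hA : ∀ x, -u₀ x - 1 ≤ (sq (n+1)).1 x := by
        apply maxp_compare ω μ hω_nonneg hμ hKpos
        intro x
        rw [heq1 n x]
        exact hsubu (sq n).1 (sq n).2 h1 h4 h2 h5 x
      have hB : ∀ x, (sq (n+1)).1 x ≤ -u₀ x := fun x => le_trans (h3 x) (h2 x)
      have hD : ∀ x, -v₀ x - 1 ≤ (sq (n+1)).2 x := by
        apply maxp_compare ω μ hω_nonneg hμ hKpos
        intro x
        rw [heq2 n x]
        exact hsubv (sq n).1 (sq n).2 h1 h4 h2 h5 x
      have hE2 : ∀ x, (sq (n+1)).2 x ≤ -v₀ x := fun x => le_trans (h6 x) (h5 x)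
      have hC : ∀ x, (sq (n+2)).1 x ≤ (sq (n+1)).1 x := by
        apply maxp_compare ω μ hω_nonneg hμ hKpos
        intro x
        rw [heq1 (n+1) x, heq1 n x]
        exact hcomp1 (sq n).1 (sq n).2 (sq (n+1)).1 (sq (n+1)).2 h3 h6 h2 h5 x
      have hF : ∀ x, (sq (n+2)).2 x ≤ (sq (n+1)).2 x := by
        apply maxp_compare ω μ hω_nonneg hμ hKpos
        intro x
        rw [heq2 (n+1) x, heq2 n x]
        exact hcomp2 (sq n).1 (sq n).2 (sq (n+1)).1 (sq (n+1)).2 h3 h6 h2 h5 x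
      exact ⟨hA, hB, hC, hD, hE2, hF⟩
  -- limits
  have hub : ∀ n x, -u₀ x - 1 ≤ (sq n).1 x := fun n => (hgood n).1
  have huub : ∀ n x, (sq n).1 x ≤ -u₀ x := fun n => (hgood n).2.1
  have hudec : ∀ n x, (sq (n+1)).1 x ≤ (sq n).1 x := fun n => (hgood n).2.2.1
  have hvb : ∀ n x, -v₀ x - 1 ≤ (sq n).2 x := fun n => (hgood n).2.2.2.1
  have hvub : ∀ n x, (sq n).2 x ≤ -v₀ x := fun n => (hgood n).2.2.2.2.1
  have hvdec : ∀ n x, (sq (n+1)).2 x ≤ (sq n).2 x := fun n => (hgood n).2.2.2.2.2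
  have hAu : ∀ x, Antitone fun n => (sq n).1 x :=
    fun x => antitone_nat_of_succ_le (fun n => hudec n x)
  have hAv : ∀ x, Antitone fun n => (sq n).2 x :=
    fun x => antitone_nat_of_succ_le (fun n => hvdec n x)
  have hBu : ∀ x, BddBelow (Set.range fun n => (sq n).1 x) := by
    intro x
    refine ⟨-u₀ x - 1, ?_⟩
    rintro b ⟨n, rfl⟩
    exact hub n x
  have hBv : ∀ x, BddBelow (Set.range fun n => (sq n).2 x) := by
    intro x
    refine ⟨-v₀ x - 1, ?_⟩
    rintro b ⟨n, rfl⟩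
    exact hvb n x
  set uL : V → ℝ := fun x => ⨅ n, (sq n).1 x with huL
  set vL : V → ℝ := fun x => ⨅ n, (sq n).2 x with hvL
  have hTu : ∀ x, Filter.Tendsto (fun n => (sq n).1 x) Filter.atTop (nhds (uL x)) := by
    intro x
    simp only [huL]
    exact tendsto_atTop_ciInf (hAu x) (hBu x)
  have hTv : ∀ x, Filter.Tendsto (fun n => (sq n).2 x) Filter.atTop (nhds (vL x)) := by
    intro x
    simp only [hvL]
    exact tendsto_atTop_ciInf (hAv x) (hBv x)
  have huLb : ∀ x, uL x ≤ -u₀ x := by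
    intro x
    have h1 : uL x ≤ (sq 0).1 x := by
      simp only [huL]
      exact ciInf_le (hBu x) 0
    exact le_trans h1 (huub 0 x)
  have hvLb : ∀ x, vL x ≤ -v₀ x := by
    intro x
    have h1 : vL x ≤ (sq 0).2 x := by
      simp only [hvL]
      exact ciInf_le (hBv x) 0
    exact le_trans h1 (hvub 0 x)
  have hTu' : ∀ x, Filter.Tendsto (fun n => (sq (n+1)).1 x) Filter.atTop (nhds (uL x)) :=
    fun x => (hTu x).comp (Filter.tendsto_add_atTop_nat 1)
  have hTv' : ∀ x, Filter.Tendsto (fun n => (sq (n+1)).2 x) Filter.atTop (nhds (vL x)) :=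
    fun x => (hTv x).comp (Filter.tendsto_add_atTop_nat 1)
  refine ⟨uL, vL, fun x => ⟨?_, ?_⟩⟩
  · -- first equation at x
    have hT1 : Filter.Tendsto (fun n => lapK ω μ K ((sq (n+1)).1) x) Filter.atTop
        (nhds (graphLap ω μ uL x - K * uL x)) := by
      simp only [lapK_apply, graphLap]
      exact ((tendsto_finset_sum _ fun y _ =>
        (((hTu' y).sub (hTu' x)).const_mul (ω x y))).const_mul (1 / μ x)).sub
        ((hTu' x).const_mul K)
    have he2 : Filter.Tendsto (fun n => Real.exp (v₀ x + (sq n).2 x)) Filter.atTop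
        (nhds (Real.exp (v₀ x + vL x))) :=
      (Real.continuous_exp.tendsto _).comp (tendsto_const_nhds.add (hTv x))
    have hH2 : Filter.Tendsto (fun n => H (Real.exp (v₀ x + (sq n).2 x))) Filter.atTop
        (nhds (H (Real.exp (v₀ x + vL x)))) :=
      ((hHc.continuousAt (Ici_mem_nhds (Real.exp_pos _))).tendsto).comp he2
    have he1 : Filter.Tendsto (fun n => Real.exp (u₀ x + (sq n).1 x)) Filter.atTop
        (nhds (Real.exp (u₀ x + uL x))) :=
      (Real.continuous_exp.tendsto _).comp (tendsto_const_nhds.add (hTu x))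
    have hg : Filter.Tendsto (fun n => primFun G (Real.exp (u₀ x + (sq n).1 x))) Filter.atTop
        (nhds (primFun G (Real.exp (u₀ x + uL x)))) :=
      primFun_tendsto G hGc hGpos hGm (fun n => (Real.exp_pos _).le)
        (fun n => Real.exp_le_one_iff.mpr (by linarith [huub n x]))
        (Real.exp_pos _).le (Real.exp_le_one_iff.mpr (by linarith [huLb x])) he1
    have hT2 : Filter.Tendsto (fun n => R1 (sq n).1 (sq n).2 x) Filter.atTop
        (nhds (-lam * Real.exp (v₀ x + vL x) * H (Real.exp (v₀ x + vL x)) *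
          primFun G (Real.exp (u₀ x + uL x)) - K * uL x + c1)) := by
      simp only [hR1]
      exact ((((he2.const_mul (-lam)).mul hH2).mul hg).sub
        ((hTu x).const_mul K)).add tendsto_const_nhds
    have hT1' : Filter.Tendsto (fun n => R1 (sq n).1 (sq n).2 x) Filter.atTop
        (nhds (graphLap ω μ uL x - K * uL x)) :=
      hT1.congr (fun n => heq1 n x)
    have hlim := tendsto_nhds_unique hT1' hT2
    simp only [hc1] at hlim
    linarith
  · -- second equation at x
    have hT1 : Filter.Tendsto (fun n => lapK ω μ K ((sq (n+1)).2) x) Filter.atTop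
        (nhds (graphLap ω μ vL x - K * vL x)) := by
      simp only [lapK_apply, graphLap]
      exact ((tendsto_finset_sum _ fun y _ =>
        (((hTv' y).sub (hTv' x)).const_mul (ω x y))).const_mul (1 / μ x)).sub
        ((hTv' x).const_mul K)
    have he1 : Filter.Tendsto (fun n => Real.exp (u₀ x + (sq n).1 x)) Filter.atTop
        (nhds (Real.exp (u₀ x + uL x))) :=
      (Real.continuous_exp.tendsto _).comp (tendsto_const_nhds.add (hTu x))
    have hG2 : Filter.Tendsto (fun n => G (Real.exp (u₀ x + (sq n).1 x))) Filter.atTop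
        (nhds (G (Real.exp (u₀ x + uL x)))) :=
      ((hGc.continuousAt (Ici_mem_nhds (Real.exp_pos _))).tendsto).comp he1
    have he2 : Filter.Tendsto (fun n => Real.exp (v₀ x + (sq n).2 x)) Filter.atTop
        (nhds (Real.exp (v₀ x + vL x))) :=
      (Real.continuous_exp.tendsto _).comp (tendsto_const_nhds.add (hTv x))
    have hg : Filter.Tendsto (fun n => primFun H (Real.exp (v₀ x + (sq n).2 x))) Filter.atTop
        (nhds (primFun H (Real.exp (v₀ x + vL x)))) :=
      primFun_tendsto H hHc hHpos hHm (fun n => (Real.exp_pos _).le)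
        (fun n => Real.exp_le_one_iff.mpr (by linarith [hvub n x]))
        (Real.exp_pos _).le (Real.exp_le_one_iff.mpr (by linarith [hvLb x])) he2
    have hT2 : Filter.Tendsto (fun n => R2 (sq n).1 (sq n).2 x) Filter.atTop
        (nhds (-lam * Real.exp (u₀ x + uL x) * G (Real.exp (u₀ x + uL x)) *
          primFun H (Real.exp (v₀ x + vL x)) - K * vL x + c2)) := by
      simp only [hR2]
      exact ((((he1.const_mul (-lam)).mul hG2).mul hg).sub
        ((hTv x).const_mul K)).add tendsto_const_nhds
    have hT1' : Filter.Tendsto (fun n => R2 (sq n).1 (sq n).2 x) Filter.atTop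
        (nhds (graphLap ω μ vL x - K * vL x)) :=
      hT1.congr (fun n => heq2 n x)
    have hlim := tendsto_nhds_unique hT1' hT2
    simp only [hc2] at hlim
    linarith
end
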